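/- arXiv:1912.05757 — 3 statements merged into one kernel-verified Lean document; each statement's English description precedes it below -/
import Mathlib

section
/- For a prime p and integers k ≥ 1, the multinomial coefficient (kp)!/((p!)^k · k!) is an integer congruent to 1 modulo p. -/
/-!
The quotient is the uniform Bell number `B(k, p)`, which satisfies the recursion
`B(m + 1, p) = C(m p + p - 1, p - 1) · B(m, p)` (the block containing a fixed element is
chosen first). By Lucas' theorem each factor `C(m p + (p - 1), p - 1)` is congruent to
`C(p - 1, p - 1) · C(m, 0) = 1` modulo `p`.
-/

namespace Nat

theorem choose_mul_add_modEq_one {p : ℕ} [Fact p.Prime] (m : ℕ) {r : ℕ} (hr : r < p) :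
    (m * p + r).choose r ≡ 1 [MOD p] := by
  have lucas :=
    Choose.choose_modEq_choose_mod_mul_choose_div_nat (n := r + m * p) (k := r) (p := p)
  rwa [add_mul_mod_self_right, add_mul_div_right _ _ (Fact.out : p.Prime).pos,
    mod_eq_of_lt hr, div_eq_of_lt hr, zero_add, choose_self, choose_zero_right, one_mul,
    add_comm] at lucas

theorem uniformBell_modEq_one {p : ℕ} [Fact p.Prime] (m : ℕ) :
    uniformBell m p ≡ 1 [MOD p] := by
  induction m with
  | zero => rw [uniformBell_zero_left]
  | succ m ih =>
    have hp : 0 < p := (Fact.out : p.Prime).pos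
    rw [uniformBell_succ_left, Nat.add_sub_assoc hp]
    have step := (choose_mul_add_modEq_one m (r := p - 1) (sub_lt hp zero_lt_one)).mul ih
    rwa [one_mul] at step

end Nat

theorem multinomial_blocks_integer_and_one_mod_p_general (p k : ℕ) (hp : p.Prime) :
    (Nat.factorial p ^ k * Nat.factorial k) ∣ Nat.factorial (k * p) ∧
      (Nat.factorial (k * p) / (Nat.factorial p ^ k * Nat.factorial k)) % p = 1 := by
  have := Fact.mk hp
  constructor
  · exact ⟨Nat.uniformBell k p, by rw [← Nat.uniformBell_mul_eq k hp.ne_zero]; ring⟩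
  · rw [← Nat.uniformBell_eq_div k hp.ne_zero, Nat.uniformBell_modEq_one k,
      Nat.mod_eq_of_lt hp.one_lt]

/-- For a prime `p` and an integer `k ≥ 1`, the multinomial coefficient
`(kp)! / ((p!)^k * k!)` is an integer (i.e. `(p!)^k * k!` divides `(kp)!`)
congruent to `1` modulo `p`. -/
theorem multinomial_blocks_integer_and_one_mod_p (p k : ℕ) (hp : p.Prime) (hk : 1 ≤ k) :
    (Nat.factorial p ^ k * Nat.factorial k) ∣ Nat.factorial (k * p) ∧
      (Nat.factorial (k * p) / (Nat.factorial p ^ k * Nat.factorial k)) % p = 1 :=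
  multinomial_blocks_integer_and_one_mod_p_general p k hp
end

section
/- Let R be a commutative ring of characteristic p (p prime) and D a derivation of R. Then the p-fold iterate D^p (composition of D with itself p times) is again a derivation of R. -/
/-! By the general Leibniz rule, `D^[p] (a * b) = ∑ (p.choose i) • D^[i] a * D^[p - i] b`, and in
characteristic `p` every binomial coefficient `p.choose i` with `0 < i < p` vanishes, leaving only
`a * D^[p] b + D^[p] a * b`. -/

open Finset

theorem iterate_map_mul_eq_sum_antidiagonal {R : Type*} [NonUnitalNonAssocSemiring R]
    (D : R →+ R) (hmul : ∀ a b : R, D (a * b) = a * D b + D a * b) (n : ℕ) (a b : R) :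
    D^[n] (a * b) = ∑ ij ∈ antidiagonal n, n.choose ij.1 • (D^[ij.1] a * D^[ij.2] b) := by
  induction n with
  | zero => simp
  | succ n ih =>
    rw [sum_antidiagonal_choose_succ_nsmul (fun i j => D^[i] a * D^[j] b) n]
    simp only [Function.iterate_succ_apply', ih, map_sum, map_nsmul, hmul, smul_add,
      sum_add_distrib]
    congr 1
    refine sum_congr rfl fun ij hij => ?_
    rw [n.choose_symm_of_eq_add (mem_antidiagonal.1 hij).symm]

theorem sum_antidiagonal_prime_choose_nsmul {R : Type*} [Semiring R] {p : ℕ} [CharP R p]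
    (hp : p.Prime) (f : ℕ → ℕ → R) :
    ∑ ij ∈ antidiagonal p, p.choose ij.1 • f ij.1 ij.2 = f 0 p + f p 0 := by
  rw [sum_eq_add_of_mem (0, p) (p, 0) (by simp) (by simp) (by simp [hp.ne_zero])]
  · simp
  rintro ⟨i, j⟩ hmem hne
  have hij : i + j = p := mem_antidiagonal.1 hmem
  have hdvd : p ∣ p.choose i := hp.dvd_choose_self (by grind) (by grind)
  rw [nsmul_eq_mul, (CharP.cast_eq_zero_iff R p _).2 hdvd, zero_mul]

/-- Let `R` be a commutative ring of characteristic `p` (`p` prime) and `D` a derivation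
of `R`, i.e. an additive map satisfying the Leibniz rule.  Then the `p`-fold iterate
`D^[p]` is again a derivation of `R`. -/
theorem iterate_p_of_derivation_is_derivation (p : ℕ) (hp : p.Prime) (R : Type*)
    [CommRing R] [CharP R p] (D : R → R)
    (hadd : ∀ a b : R, D (a + b) = D a + D b)
    (hmul : ∀ a b : R, D (a * b) = a * D b + D a * b) :
    (∀ a b : R, D^[p] (a + b) = D^[p] a + D^[p] b) ∧
      (∀ a b : R, D^[p] (a * b) = a * D^[p] b + D^[p] a * b) := by
  let D' : R →+ R := AddMonoidHom.mk' D hadd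
  refine ⟨iterate_map_add D' p, fun a b => ?_⟩
  change D'^[p] (a * b) = a * D'^[p] b + D'^[p] a * b
  rw [iterate_map_mul_eq_sum_antidiagonal D' hmul,
    sum_antidiagonal_prime_choose_nsmul hp fun i j => D'^[i] a * D'^[j] b]
  simp [add_comm]
end

section
/- Let p be prime and (A, J, γ) a divided power algebra over a ring of characteristic p. Write any n ≥ 0 in base p as n = a_0 + a_1 p + ... + a_k p^k with 0 ≤ a_i < p. Then for x ∈ J, γ_n(x) = u · γ_1(x)^{a_0} · γ_p(x)^{a_1} · ... · γ_{p^k}(x)^{a_k} for some unit u in Z/p (i.e., the two sides differ by a nonzero scalar in F_p ⊂ A). -/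
/-!
Since `γ_l(x) γ_m(x) = C(l + m, l) γ_{l+m}(x)`, multiplying out `∏ γ_{p^i}(x)^{a_i}` one factor
`γ_{p^i}(x)` at a time, from the lowest digit upwards, gives `γ_n(x)` times a product of binomial
coefficients. Each of them is `C(l + m, l)` with `m` a multiple of `p^j` and `l + m < p^{j+1}`,
so adding `l` and `m` in base `p` has no carries and, by Kummer's theorem, `p` does not divide it.
The product `u` of these coefficients is prime to `p`, so in characteristic `p` it is inverted by
`u^{p-2}` (Fermat).
-/

open Finset

theorem Nat.Prime.not_dvd_choose_of_pow_dvd_of_add_lt {p j l m : ℕ} (hp : p.Prime)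
    (hm : p ^ j ∣ m) (hlm : l + m < p ^ (j + 1)) : ¬ p ∣ (l + m).choose l := by
  rw [← emultiplicity_eq_zero, add_comm, hp.emultiplicity_choose' (Nat.lt_succ_self _),
    Nat.cast_eq_zero, Finset.card_eq_zero, filter_eq_empty_iff]
  intro t _
  rw [not_le]
  rcases le_or_gt t j with htj | htj
  · rw [Nat.mod_eq_zero_of_dvd ((pow_dvd_pow p htj).trans hm), add_zero]
    exact Nat.mod_lt l (pow_pos hp.pos t)
  · calc l % p ^ t + m % p ^ t ≤ l + m := add_le_add (Nat.mod_le _ _) (Nat.mod_le _ _)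
      _ < p ^ (j + 1) := hlm
      _ ≤ p ^ t := Nat.pow_le_pow_right hp.pos htj

theorem Nat.sum_range_mul_pow_lt_pow {p : ℕ} {a : ℕ → ℕ} :
    ∀ {k : ℕ}, (∀ i < k, a i < p) → ∑ i ∈ range k, a i * p ^ i < p ^ k
  | 0, _ => by simp
  | k + 1, ha => by
    have ih := Nat.sum_range_mul_pow_lt_pow fun i hi => ha i (Nat.lt_succ_of_lt hi)
    calc ∑ i ∈ range (k + 1), a i * p ^ i < p ^ k + a k * p ^ k := by
          rw [sum_range_succ]; omega
      _ = (a k + 1) * p ^ k := by ring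
      _ ≤ p * p ^ k := Nat.mul_le_mul_right _ (ha k k.lt_succ_self)
      _ = p ^ (k + 1) := by ring

/-- In characteristic `p`, `y` and `z` differ by a unit of `𝔽_p ⊆ A`. -/
def CoprimeMultiple (p : ℕ) {A : Type*} [Semiring A] (y z : A) : Prop :=
  ∃ u : ℕ, ¬ p ∣ u ∧ y = u * z

namespace CoprimeMultiple

variable {p : ℕ} {A : Type*}

theorem refl [Semiring A] (hp : p ≠ 1) (y : A) : CoprimeMultiple p y y :=
  ⟨1, mt Nat.dvd_one.mp hp, by rw [Nat.cast_one, one_mul]⟩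

theorem trans [Semiring A] (hp : p.Prime) {y z w : A} (hyz : CoprimeMultiple p y z)
    (hzw : CoprimeMultiple p z w) : CoprimeMultiple p y w := by
  obtain ⟨u, hu, rfl⟩ := hyz
  obtain ⟨v, hv, rfl⟩ := hzw
  exact ⟨u * v, fun h => (hp.dvd_mul.mp h).elim hu hv, by rw [Nat.cast_mul, mul_assoc]⟩

theorem mul [CommSemiring A] (hp : p.Prime) {y₁ z₁ y₂ z₂ : A} (h₁ : CoprimeMultiple p y₁ z₁)
    (h₂ : CoprimeMultiple p y₂ z₂) : CoprimeMultiple p (y₁ * y₂) (z₁ * z₂) := by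
  obtain ⟨u, hu, rfl⟩ := h₁
  obtain ⟨v, hv, rfl⟩ := h₂
  exact ⟨u * v, fun h => (hp.dvd_mul.mp h).elim hu hv, by push_cast; ring⟩

theorem symm [Semiring A] [CharP A p] (hp : p.Prime) {y z : A} (h : CoprimeMultiple p y z) :
    CoprimeMultiple p z y := by
  obtain ⟨u, hu, rfl⟩ := h
  have hfermat : ((u ^ (p - 1) : ℕ) : A) = 1 := by
    rw [← Nat.cast_one (R := A), ← Nat.totient_prime hp]
    exact CharP.natCast_eq_natCast' A p (Nat.ModEq.pow_totient (hp.coprime_iff_not_dvd.mpr hu).symm)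
  have hp1 : p - 1 = p - 2 + 1 := by have := hp.two_le; omega
  refine ⟨u ^ (p - 2), fun h => hu (hp.dvd_of_dvd_pow h), ?_⟩
  rw [← mul_assoc, ← Nat.cast_mul, ← pow_succ, ← hp1, hfermat, one_mul]

end CoprimeMultiple

namespace DividedPowers

variable {p : ℕ} {A : Type*} [CommRing A] {J : Ideal A} (γ : DividedPowers J) {x : A}

theorem coprimeMultiple_mul_dpow (hx : x ∈ J) {l m : ℕ} (h : ¬ p ∣ (l + m).choose l) :
    CoprimeMultiple p (γ.dpow l x * γ.dpow m x) (γ.dpow (l + m) x) :=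
  ⟨_, h, γ.mul_dpow hx⟩

theorem coprimeMultiple_dpow_pow_pow (hp : p.Prime) (hx : x ∈ J) (i : ℕ) :
    ∀ {a : ℕ}, a < p → CoprimeMultiple p (γ.dpow (p ^ i) x ^ a) (γ.dpow (a * p ^ i) x)
  | 0, _ => by
    rw [pow_zero, zero_mul, γ.dpow_zero hx]
    exact .refl hp.ne_one 1
  | a + 1, ha => by
    have hdigit : p ^ i + a * p ^ i < p ^ (i + 1) := by
      calc p ^ i + a * p ^ i = (a + 1) * p ^ i := by ring
        _ < p * p ^ i := Nat.mul_lt_mul_of_pos_right ha (pow_pos hp.pos i)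
        _ = p ^ (i + 1) := (pow_succ' _ _).symm
    rw [pow_succ', Nat.succ_mul, add_comm]
    exact ((CoprimeMultiple.refl hp.ne_one _).mul hp
      (coprimeMultiple_dpow_pow_pow hp hx i (Nat.lt_of_succ_lt ha))).trans hp
      (γ.coprimeMultiple_mul_dpow hx
        (hp.not_dvd_choose_of_pow_dvd_of_add_lt (Dvd.intro_left a rfl) hdigit))

theorem coprimeMultiple_prod_dpow_pow (hp : p.Prime) (hx : x ∈ J) {a : ℕ → ℕ} :
    ∀ {k : ℕ}, (∀ i < k, a i < p) → CoprimeMultiple p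
      (∏ i ∈ range k, γ.dpow (p ^ i) x ^ a i) (γ.dpow (∑ i ∈ range k, a i * p ^ i) x)
  | 0, _ => by
    rw [prod_range_zero, sum_range_zero, γ.dpow_zero hx]
    exact .refl hp.ne_one 1
  | k + 1, ha => by
    have ha' : ∀ i < k, a i < p := fun i hi => ha i (Nat.lt_succ_of_lt hi)
    have hlower := Nat.sum_range_mul_pow_lt_pow ha
    rw [sum_range_succ] at hlower
    rw [prod_range_succ, sum_range_succ]
    exact ((coprimeMultiple_prod_dpow_pow hp hx ha').mul hp
      (γ.coprimeMultiple_dpow_pow_pow hp hx k (ha k k.lt_succ_self))).trans hp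
      (γ.coprimeMultiple_mul_dpow hx
        (hp.not_dvd_choose_of_pow_dvd_of_add_lt (Dvd.intro_left _ rfl) hlower))

end DividedPowers

/-- Let `p` be prime and `(A, J, γ)` a divided power algebra over a ring of
characteristic `p`.  Write `n = a_0 + a_1 p + ⋯ + a_k p^k` in base `p`
(so `0 ≤ a_i < p`).  Then for `x ∈ J`,
`γ_n(x) = u · γ_1(x)^{a_0} · γ_p(x)^{a_1} ⋯ γ_{p^k}(x)^{a_k}` for some unit `u` of
`F_p`, i.e. a natural number `u` not divisible by `p`. -/
theorem dpow_eq_unit_mul_prod_dpow_pow (p : ℕ) (hp : p.Prime) {A : Type*} [CommRing A]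
    [CharP A p] {J : Ideal A} (γ : DividedPowers J) (x : A) (hx : x ∈ J)
    (n k : ℕ) (a : ℕ → ℕ) (ha : ∀ i, a i < p)
    (hn : n = ∑ i ∈ Finset.range (k + 1), a i * p ^ i) :
    ∃ u : ℕ, ¬ p ∣ u ∧
      γ.dpow n x = (u : A) * ∏ i ∈ Finset.range (k + 1), γ.dpow (p ^ i) x ^ a i := by
  subst hn
  exact (γ.coprimeMultiple_prod_dpow_pow hp hx fun i _ => ha i).symm hp
end
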